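/- arXiv:1209.6087 — 2 statements merged into one kernel-verified Lean document; each statement's English description precedes it below -/
import Mathlib

section
/- Suppose a = 2 (so a² < 4q automatically, since q ≥ 2). Then |M(X)| ≤ q^{X/2} for every positive integer X. Moreover, if arccos(1/√q)/π is irrational, then for every ε > 0 there exist infinitely many positive integers X with |M(X)| > (1 − ε)·q^{X/2}. -/
open Real Filter Topology

/-- The coefficient sequence `c_N` with `c_0 = 1`, `c_1 = a - q - 1`,
`c_2 = a*c_1 - q*c_0 + q`, and `c_N = a*c_{N-1} - q*c_{N-2}` for `N ≥ 3`;
these are the Taylor coefficients at `u = 0` of `(1-u)(1-qu)/(1-au+qu²)`,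
the reciprocal of the zeta function of an elliptic curve over `F_q` with
Frobenius trace `a`. -/
def mertC (q a : ℤ) : ℕ → ℤ
  | 0 => 1
  | 1 => a - q - 1
  | 2 => a * (a - q - 1) - q * 1 + q
  | (N + 3) => a * mertC q a (N + 2) - q * mertC q a (N + 1)

/-- `M(X) = ∑_{N=0}^{X-1} c_N`, the Mertens summatory function of the
Möbius function of an elliptic curve over `F_q` with Frobenius trace `a`. -/
def mertM (q a : ℤ) (X : ℕ) : ℤ := ∑ N ∈ Finset.range X, mertC q a N

/-!
For `a = 2` the roots of `1 - 2u + qu²` are the inverses of `√q e^{± iθ}` with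
`cos θ = 1/√q`, and `M(X)` satisfies the same order-two recurrence as the `c_N`, so that
`M(X) = q^{X/2} cos (Xθ)` for `X ≥ 1`. The upper bound is `|cos| ≤ 1`. For the lower bound,
Dirichlet's approximation theorem gives arbitrarily large `X` with `Xθ` arbitrarily close
to a multiple of `π`, where `|cos (Xθ)|` is close to `1`.
-/

theorem mertM_add_three (q a : ℤ) (X : ℕ) :
    mertM q a (X + 3) = a * mertM q a (X + 2) - q * mertM q a (X + 1) := by
  induction X with
  | zero =>
    simp only [mertM, Finset.sum_range_succ, Finset.sum_range_zero, mertC]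
    ring
  | succ X ih =>
    have hc : mertC q a (X + 3) = a * mertC q a (X + 2) - q * mertC q a (X + 1) := rfl
    simp only [mertM, Finset.sum_range_succ _ (X + 3), Finset.sum_range_succ _ (X + 2),
      Finset.sum_range_succ _ (X + 1)] at ih ⊢
    linear_combination ih + hc

/-- The real parts of the powers of `ρ e^{iθ}` satisfy the recurrence whose characteristic
polynomial is `T² - 2ρ cos θ T + ρ²`. -/
theorem pow_mul_cos_add_two (ρ θ : ℝ) (n : ℕ) :
    ρ ^ (n + 2) * cos ((n + 2 : ℕ) * θ) =
      2 * ρ * cos θ * (ρ ^ (n + 1) * cos ((n + 1 : ℕ) * θ)) - ρ ^ 2 * (ρ ^ n * cos (n * θ)) := by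
  have h₂ : ((n + 2 : ℕ) : ℝ) * θ = (n + 1 : ℕ) * θ + θ := by push_cast; ring
  have h₀ : (n : ℝ) * θ = (n + 1 : ℕ) * θ - θ := by push_cast; ring
  rw [h₂, h₀, cos_add, cos_sub]
  ring

theorem mertM_two_eq_sqrt_pow_mul_cos (q : ℤ) (hq : 1 ≤ q) {X : ℕ} (hX : X ≠ 0) :
    (mertM q 2 X : ℝ) = √(q : ℝ) ^ X * cos (X * arccos (1 / √(q : ℝ))) := by
  set θ := arccos (1 / √(q : ℝ))
  have hq₁ : (1 : ℝ) ≤ q := mod_cast hq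
  have hsq : √(q : ℝ) ^ 2 = q := sq_sqrt (by linarith)
  have hcos : √(q : ℝ) * cos θ = 1 := by
    have hsqrt : 1 ≤ √(q : ℝ) := one_le_sqrt.mpr hq₁
    rw [cos_arccos (by linarith [one_div_pos.mpr (by linarith : (0 : ℝ) < √(q : ℝ))])
      ((div_le_one (by linarith)).mpr hsqrt)]
    field_simp
  have hpair : ∀ Y : ℕ,
      (mertM q 2 (Y + 1) : ℝ) = √(q : ℝ) ^ (Y + 1) * cos ((Y + 1 : ℕ) * θ) ∧
      (mertM q 2 (Y + 2) : ℝ) = √(q : ℝ) ^ (Y + 2) * cos ((Y + 2 : ℕ) * θ) := by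
    intro Y
    induction Y with
    | zero =>
      have hM : mertM q 2 2 = 2 - q := by
        simp only [mertM, Finset.sum_range_succ, Finset.sum_range_zero, mertC]
        ring
      refine ⟨by simp [mertM, mertC, hcos], ?_⟩
      simp only [hM, zero_add, Nat.cast_ofNat, cos_two_mul, Int.cast_sub, Int.cast_ofNat]
      linear_combination (-2 : ℝ) * (√(q : ℝ) * cos θ + 1) * hcos + hsq
    | succ Y ih =>
      refine ⟨ih.2, ?_⟩
      have hrec := pow_mul_cos_add_two √(q : ℝ) θ (Y + 1)
      simp only [show Y + 1 + 2 = Y + 3 from rfl, show Y + 1 + 1 = Y + 2 from rfl] at hrec ⊢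
      rw [mertM_add_three, hrec]
      push_cast at ih ⊢
      rw [ih.1, ih.2]
      linear_combination (-2 : ℝ) * (√(q : ℝ) ^ (Y + 2) * cos ((Y + 2) * θ)) * hcos
        + √(q : ℝ) ^ (Y + 1) * cos ((Y + 1) * θ) * hsq
  obtain ⟨Y, rfl⟩ := Nat.exists_eq_add_one_of_ne_zero hX
  exact (hpair Y).1

/-- Dirichlet's approximation theorem at precision `η / (N + 1)`, scaled by `N + 1`. -/
theorem exists_nat_ge_abs_mul_sub_int_lt (ξ : ℝ) (N : ℕ) {η : ℝ} (hη : 0 < η) :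
    ∃ (X : ℕ) (k : ℤ), N ≤ X ∧ 0 < X ∧ |X * ξ - k| < η := by
  obtain ⟨n, hn⟩ := exists_nat_one_div_lt (div_pos hη (N.cast_add_one_pos (α := ℝ)))
  obtain ⟨m, hm₀, -, hm⟩ := exists_nat_abs_mul_sub_round_le ξ n.succ_pos
  refine ⟨(N + 1) * m, (N + 1) * round (m * ξ), ?_, by positivity, ?_⟩
  · exact N.le_succ.trans (Nat.le_mul_of_pos_right _ hm₀)
  · have hmn : 1 / ((n.succ : ℕ) + 1 : ℝ) ≤ 1 / (n + 1) := by
      gcongr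
      simp
    calc |(((N + 1) * m : ℕ) : ℝ) * ξ - (((N + 1) * round (m * ξ) : ℤ) : ℝ)|
        = (N + 1) * |m * ξ - round (m * ξ)| := by
          push_cast
          rw [mul_assoc, ← mul_sub, abs_mul, abs_of_pos N.cast_add_one_pos]
      _ < (N + 1) * (η / (N + 1)) := by gcongr; linarith
      _ = η := by field_simp

theorem exists_nat_ge_one_sub_lt_abs_cos_mul (θ : ℝ) (N : ℕ) {ε : ℝ} (hε : 0 < ε) :
    ∃ X : ℕ, N ≤ X ∧ 0 < X ∧ 1 - ε < |cos (X * θ)| := by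
  have hnear : ∀ᶠ t in 𝓝 (0 : ℝ), 1 - ε < cos t :=
    (continuous_cos.tendsto' 0 1 cos_zero).eventually_const_lt (by linarith)
  obtain ⟨δ, hδ, hcos⟩ := Metric.eventually_nhds_iff.mp hnear
  obtain ⟨X, k, hN, hX, hk⟩ := exists_nat_ge_abs_mul_sub_int_lt (θ / π) N (div_pos hδ pi_pos)
  refine ⟨X, hN, hX, ?_⟩
  have hsplit : X * θ = (X * (θ / π) - k) * π + k * π := by field_simp; ring
  have hsmall : dist ((X * (θ / π) - k) * π) 0 < δ := by
    rw [dist_zero_right, norm_mul, norm_eq_abs, norm_of_nonneg pi_pos.le]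
    rwa [lt_div_iff₀ pi_pos] at hk
  rw [hsplit, cos_add_int_mul_pi, abs_mul, abs_neg_one_zpow, one_mul]
  exact (hcos hsmall).trans_le (le_abs_self _)

theorem mertens_conjecture_trace_two (q a : ℤ) (hq : 2 ≤ q) (ha : a = 2) :
    (∀ X : ℕ, 1 ≤ X → |(mertM q a X : ℝ)| ≤ (q : ℝ) ^ ((X : ℝ) / 2)) ∧
    (Irrational (Real.arccos (1 / Real.sqrt (q : ℝ)) / Real.pi) →
      ∀ ε : ℝ, 0 < ε → ∀ X₀ : ℕ, ∃ X : ℕ, X₀ ≤ X ∧ 1 ≤ X ∧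
        |(mertM q a X : ℝ)| > (1 - ε) * (q : ℝ) ^ ((X : ℝ) / 2)) := by
  subst ha
  set θ := arccos (1 / √(q : ℝ))
  have habs : ∀ X : ℕ, 1 ≤ X → |(mertM q 2 X : ℝ)| = (q : ℝ) ^ ((X : ℝ) / 2) * |cos (X * θ)| := by
    intro X hX
    rw [mertM_two_eq_sqrt_pow_mul_cos q (by linarith) (by omega), abs_mul,
      rpow_div_two_eq_sqrt _ (by positivity), rpow_natCast, abs_of_nonneg (by positivity)]
  refine ⟨fun X hX => ?_, fun _ ε hε X₀ => ?_⟩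
  · rw [habs X hX]
    exact mul_le_of_le_one_right (by positivity) (abs_cos_le_one _)
  · obtain ⟨X, hX₀, hX, hcos⟩ := exists_nat_ge_one_sub_lt_abs_cos_mul θ X₀ hε
    refine ⟨X, hX₀, hX, ?_⟩
    rw [habs X hX, mul_comm]
    exact mul_lt_mul_of_pos_right hcos (by positivity)
end

section
/- Let m ≥ 1 be an odd integer and suppose q = 2^m and a = −2^{(m+1)/2} (the case a = −√(2q), Frobenius angle θ = 3π/4). Then limsup_{X→∞} |M(X)|/2^{mX/2} = √2 + 2^{−m/2}, and this value is attained: for every positive integer X ≡ 3 (mod 8), M(X) = (√2 + 2^{−m/2})·2^{mX/2}. -/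
open Real Filter

lemma mertM_succ (q a : ℤ) (X : ℕ) : mertM q a (X + 1) = mertM q a X + mertC q a X :=
  Finset.sum_range_succ _ _

lemma mertM_rec (q a : ℤ) : ∀ X, 1 ≤ X →
    mertM q a (X + 2) = a * mertM q a (X + 1) - q * mertM q a X := by
  intro X hX
  induction X with
  | zero => omega
  | succ n ih =>
    rcases Nat.lt_or_ge n 1 with h | h
    · interval_cases n
      simp [mertM, mertC, Finset.sum_range_succ]; ring
    · obtain ⟨p, rfl⟩ : ∃ p, n = p + 1 := ⟨n - 1, by omega⟩
      have h1 := ih (by omega)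
      have h2 := mertM_succ q a (p + 3)
      have h3 := mertM_succ q a (p + 2)
      have h4 := mertM_succ q a (p + 1)
      have h5 : mertC q a (p + 3) = a * mertC q a (p + 2) - q * mertC q a (p + 1) := rfl
      show mertM q a (p + 4) = _
      linear_combination h2 + h5 + h1 - a * h3 + q * h4

lemma M1 (b : ℤ) : mertM (2*b^2) (-(2*b)) 1 = 1 := by
  simp [mertM, mertC, Finset.sum_range_succ]
lemma M2 (b : ℤ) : mertM (2*b^2) (-(2*b)) 2 = -(2*b) - 2*b^2 := by
  simp [mertM, mertC, Finset.sum_range_succ]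
lemma M3 (b : ℤ) : mertM (2*b^2) (-(2*b)) 3 = 4*b^3 + 2*b^2 := by
  simp [mertM, mertC, Finset.sum_range_succ]; ring
lemma M4 (b : ℤ) : mertM (2*b^2) (-(2*b)) 4 = -(4*b^4) := by
  simp [mertM, mertC, Finset.sum_range_succ]; ring
lemma M5 (b : ℤ) : mertM (2*b^2) (-(2*b)) 5 = -(4*b^4) := by
  simp [mertM, mertC, Finset.sum_range_succ]; ring
lemma M6 (b : ℤ) : mertM (2*b^2) (-(2*b)) 6 = 8*b^5 + 8*b^6 := by
  simp [mertM, mertC, Finset.sum_range_succ]; ring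
lemma M7 (b : ℤ) : mertM (2*b^2) (-(2*b)) 7 = -(16*b^7 + 8*b^6) := by
  simp [mertM, mertC, Finset.sum_range_succ]; ring
lemma M8 (b : ℤ) : mertM (2*b^2) (-(2*b)) 8 = 16*b^8 := by
  simp [mertM, mertC, Finset.sum_range_succ]; ring
lemma M9 (b : ℤ) : mertM (2*b^2) (-(2*b)) 9 = 16*b^8 := by
  simp [mertM, mertC, Finset.sum_range_succ]; ring
lemma M10 (b : ℤ) : mertM (2*b^2) (-(2*b)) 10 = 16*b^8 * (-(2*b) - 2*b^2) := by
  simp [mertM, mertC, Finset.sum_range_succ]; ring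

set_option maxHeartbeats 800000 in
lemma M_period_aux (b : ℤ) : ∀ n : ℕ,
    mertM (2*b^2) (-(2*b)) (n + 9) = (2*b^2)^4 * mertM (2*b^2) (-(2*b)) (n + 1) ∧
    mertM (2*b^2) (-(2*b)) (n + 10) = (2*b^2)^4 * mertM (2*b^2) (-(2*b)) (n + 2) := by
  intro n
  induction n with
  | zero =>
    refine ⟨?_, ?_⟩
    · rw [M9, M1]; ring
    · rw [M10, M2]; ring
  | succ p ih =>
    obtain ⟨ih1, ih2⟩ := ih
    refine ⟨ih2, ?_⟩
    have h1 : mertM (2*b^2) (-(2*b)) (p + 11) =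
        -(2*b) * mertM (2*b^2) (-(2*b)) (p + 10) - (2*b^2) * mertM (2*b^2) (-(2*b)) (p + 9) :=
      mertM_rec (2*b^2) (-(2*b)) (p + 9) (by omega)
    have h2 : mertM (2*b^2) (-(2*b)) (p + 3) =
        -(2*b) * mertM (2*b^2) (-(2*b)) (p + 2) - (2*b^2) * mertM (2*b^2) (-(2*b)) (p + 1) :=
      mertM_rec (2*b^2) (-(2*b)) (p + 1) (by omega)
    show mertM (2*b^2) (-(2*b)) (p + 11) = (2*b^2)^4 * mertM (2*b^2) (-(2*b)) (p + 3)
    rw [h1, h2, ih1, ih2]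
    ring

lemma M_pow (b : ℤ) : ∀ j r : ℕ, 1 ≤ r →
    mertM (2*b^2) (-(2*b)) (8*j + r) = ((2*b^2)^4)^j * mertM (2*b^2) (-(2*b)) r := by
  intro j
  induction j with
  | zero => intro r _; simp
  | succ p ih =>
    intro r hr
    have e : 8*(p+1) + r = (8*p + r - 1) + 9 := by omega
    have e2 : (8*p + r - 1) + 1 = 8*p + r := by omega
    rw [e, (M_period_aux b (8*p + r - 1)).1, e2, ih r hr]
    ring


set_option maxHeartbeats 1600000 in
/-- Residue-class bounds: for `1 ≤ r ≤ 8`,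
`|M(r)| ≤ (√2 + (√2·B)⁻¹)·(√2·B)^r`, with equality when `r = 3`. -/
lemma mert_res (b : ℤ) (B : ℝ) (hbB : ((b : ℤ) : ℝ) = B) (hB1 : 1 ≤ B)
    (r : ℕ) (hr1 : 1 ≤ r) (hr8 : r ≤ 8) :
    |(mertM (2*b^2) (-(2*b)) r : ℝ)| ≤
      (Real.sqrt 2 + (Real.sqrt 2 * B)⁻¹) * (Real.sqrt 2 * B) ^ r ∧
    (r = 3 → (mertM (2*b^2) (-(2*b)) r : ℝ) =
      (Real.sqrt 2 + (Real.sqrt 2 * B)⁻¹) * (Real.sqrt 2 * B) ^ r) := by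
  set s : ℝ := Real.sqrt 2 with hsdef
  have hs_pos : 0 < s := Real.sqrt_pos.2 (by norm_num)
  have hs2 : s ^ 2 = 2 := Real.sq_sqrt (by norm_num)
  have hs1 : 1 ≤ s := by nlinarith
  have hs43 : (4:ℝ)/3 ≤ s := by nlinarith
  have hB_pos : (0:ℝ) < B := by linarith
  have hsB_pos : 0 < s * B := mul_pos hs_pos hB_pos
  have hs3 : s ^ 3 = 2 * s := by rw [pow_succ, hs2]
  have hs4 : s ^ 4 = 4 := by nlinarith
  have hs5 : s ^ 5 = 4 * s := by nlinarith [hs4]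
  have hs6 : s ^ 6 = 8 := by nlinarith [hs4]
  have hs7 : s ^ 7 = 8 * s := by nlinarith [hs6]
  have hs8 : s ^ 8 = 16 := by nlinarith [hs4]
  have hLr : ∀ n : ℕ, (s + (s*B)⁻¹) * (s * B) ^ (n + 1) =
      s * (s * B) ^ (n + 1) + (s * B) ^ n := by
    intro n
    rw [add_mul, pow_succ]
    field_simp
  have hBn : ∀ n : ℕ, (0:ℝ) ≤ B ^ n := fun n => (pow_pos hB_pos n).le
  have hBge : ∀ n : ℕ, (1:ℝ) ≤ B ^ n := fun n => one_le_pow₀ hB1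
  interval_cases r
  · rw [M1]
    refine ⟨?_, by omega⟩
    rw [hLr 0]
    push_cast
    rw [abs_one, pow_zero, pow_one]
    nlinarith [mul_nonneg (mul_nonneg hs_pos.le hs_pos.le) hB_pos.le]
  · rw [M2]
    refine ⟨?_, by omega⟩
    rw [hLr 1]
    push_cast [hbB]
    rw [abs_of_nonpos (by nlinarith [hBn 2]), pow_one, mul_pow, hs2]
    nlinarith [mul_nonneg (mul_nonneg (sub_nonneg.2 hs1) hB_pos.le) (sub_nonneg.2 hB1),
      mul_nonneg hB_pos.le (by linarith : (0:ℝ) ≤ 3*s - 4)]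
  · rw [M3]
    have heq : ((4*b^3 + 2*b^2 : ℤ) : ℝ) = (s + (s*B)⁻¹) * (s * B) ^ 3 := by
      rw [hLr 2]
      push_cast [hbB]
      rw [mul_pow, mul_pow, hs3, hs2]
      linear_combination (-2*B^3) * hs2
    refine ⟨?_, fun _ => heq⟩
    have hnn : (0:ℝ) ≤ (s + (s*B)⁻¹) * (s * B) ^ 3 := by positivity
    rw [heq, abs_of_nonneg hnn]
  · rw [M4]
    refine ⟨?_, by omega⟩
    rw [hLr 3]
    push_cast [hbB]
    rw [abs_of_nonpos (by nlinarith [hBn 4]), mul_pow, mul_pow, hs4, hs3]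
    nlinarith [mul_nonneg (sub_nonneg.2 hs1) (hBn 4), mul_nonneg hs_pos.le (hBn 3)]
  · rw [M5]
    refine ⟨?_, by omega⟩
    rw [hLr 4]
    push_cast [hbB]
    rw [abs_of_nonpos (by nlinarith [hBn 4]), mul_pow, mul_pow, hs5, hs4]
    nlinarith [mul_nonneg (hBn 5) (sq_nonneg s), hs2, mul_nonneg (hBn 4) hs_pos.le]
  · rw [M6]
    refine ⟨?_, by omega⟩
    rw [hLr 5]
    push_cast [hbB]
    rw [abs_of_nonneg (by positivity), mul_pow, mul_pow, hs6, hs5]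
    nlinarith [mul_nonneg (mul_nonneg (sub_nonneg.2 hs1) (hBn 5)) (sub_nonneg.2 hB1),
      mul_nonneg (hBn 5) (by linarith : (0:ℝ) ≤ 3*s - 4)]
  · rw [M7]
    refine ⟨?_, by omega⟩
    rw [hLr 6]
    push_cast [hbB]
    rw [abs_of_nonpos (by nlinarith [hBn 7, hBn 6]), mul_pow, mul_pow, hs7, hs6]
    nlinarith [mul_nonneg (hBn 7) (sq_nonneg s), hs2, hBn 7, hBn 6]
  · rw [M8]
    refine ⟨?_, by omega⟩
    rw [hLr 7]
    push_cast [hbB]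
    rw [abs_of_nonneg (by positivity), mul_pow, mul_pow, hs8, hs7]
    nlinarith [mul_nonneg (sub_nonneg.2 hs1) (hBn 8), mul_nonneg hs_pos.le (hBn 7)]

set_option maxHeartbeats 800000 in
/-- Global bound: for `X ≥ 1`,
`|M(X)| ≤ (√2 + (√2·B)⁻¹)·(√2·B)^X`, with equality when `X ≡ 3 [MOD 8]`. -/
lemma mert_key (b : ℤ) (B : ℝ) (hbB : ((b : ℤ) : ℝ) = B) (hB1 : 1 ≤ B)
    (X : ℕ) (hX : 1 ≤ X) :
    |(mertM (2*b^2) (-(2*b)) X : ℝ)| ≤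
      (Real.sqrt 2 + (Real.sqrt 2 * B)⁻¹) * (Real.sqrt 2 * B) ^ X ∧
    (X % 8 = 3 → (mertM (2*b^2) (-(2*b)) X : ℝ) =
      (Real.sqrt 2 + (Real.sqrt 2 * B)⁻¹) * (Real.sqrt 2 * B) ^ X) := by
  set s : ℝ := Real.sqrt 2 with hsdef
  have hs_pos : 0 < s := Real.sqrt_pos.2 (by norm_num)
  have hs2 : s ^ 2 = 2 := Real.sq_sqrt (by norm_num)
  have hB_pos : (0:ℝ) < B := by linarith
  have hs4 : s ^ 4 = 4 := by nlinarith
  have hs8 : s ^ 8 = 16 := by nlinarith [hs4]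
  have h8 : (s * B) ^ 8 = (2 * B ^ 2) ^ 4 := by rw [mul_pow, hs8]; ring
  obtain ⟨j, r, rfl, hr1, hr8⟩ : ∃ j r, X = 8*j + r ∧ 1 ≤ r ∧ r ≤ 8 :=
    ⟨(X - 1) / 8, (X - 1) % 8 + 1, by omega, by omega, by omega⟩
  have hMX : (mertM (2*b^2) (-(2*b)) (8*j + r) : ℝ) =
      ((2 * B ^ 2) ^ 4) ^ j * (mertM (2*b^2) (-(2*b)) r : ℝ) := by
    rw [M_pow b j r hr1]
    push_cast [hbB]
    ring
  have hpow : (s * B) ^ (8*j + r) = ((2 * B ^ 2) ^ 4) ^ j * (s * B) ^ r := by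
    rw [pow_add, pow_mul, h8]
  have hc_pos : (0 : ℝ) < ((2 * B ^ 2) ^ 4) ^ j := by positivity
  obtain ⟨hb1, hb2⟩ := mert_res b B hbB hB1 r hr1 hr8
  constructor
  · rw [hMX, abs_mul, abs_of_nonneg hc_pos.le, hpow]
    calc ((2 * B ^ 2) ^ 4) ^ j * |(mertM (2*b^2) (-(2*b)) r : ℝ)|
        <= ((2 * B ^ 2) ^ 4) ^ j * ((s + (s*B)⁻¹) * (s * B) ^ r) :=
          mul_le_mul_of_nonneg_left hb1 hc_pos.le
      _ = (s + (s*B)⁻¹) * (((2 * B ^ 2) ^ 4) ^ j * (s * B) ^ r) := by ring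
  · intro h3
    have hr3 : r = 3 := by omega
    rw [hMX, hb2 hr3, hpow]
    ring

theorem mertens_limsup_neg_sqrt_2q (m : ℕ) (hm : 1 ≤ m) (hodd : Odd m) (q a : ℤ)
    (hq : q = 2 ^ m) (ha : a = -(2 ^ ((m + 1) / 2))) :
    Filter.limsup (fun X : ℕ => |(mertM q a X : ℝ)| / (2 : ℝ) ^ ((m : ℝ) * (X : ℝ) / 2))
        Filter.atTop = Real.sqrt 2 + (2 : ℝ) ^ (-(m : ℝ) / 2) ∧
    ∀ X : ℕ, 1 ≤ X → X % 8 = 3 →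
      (mertM q a X : ℝ) =
        (Real.sqrt 2 + (2 : ℝ) ^ (-(m : ℝ) / 2)) * (2 : ℝ) ^ ((m : ℝ) * (X : ℝ) / 2) := by
  obtain ⟨t, hmt⟩ := hodd
  have hmt' : m = 2 * t + 1 := by omega
  have hqb : q = 2 * ((2:ℤ)^t) ^ 2 := by
    rw [hq, hmt', mul_comm 2 t, pow_succ, pow_mul]
    ring
  have hab : a = -(2 * (2:ℤ)^t) := by
    have h2 : (m + 1) / 2 = t + 1 := by omega
    rw [ha, h2, pow_succ]; ring
  set s : ℝ := Real.sqrt 2 with hsdef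
  set B : ℝ := (2 : ℝ) ^ t with hBdef
  have hbB : (((2:ℤ)^t : ℤ) : ℝ) = B := by rw [hBdef]; push_cast; rfl
  have hB1 : 1 ≤ B := one_le_pow₀ (by norm_num)
  have hs_pos : 0 < s := Real.sqrt_pos.2 (by norm_num)
  have hB_pos : 0 < B := by positivity
  have hsB_pos : 0 < s * B := mul_pos hs_pos hB_pos
  have hg : ∀ X : ℕ, (2 : ℝ) ^ ((m : ℝ) * (X : ℝ) / 2) = (s * B) ^ X := by
    intro X
    have h1 : (m : ℝ) * (X : ℝ) / 2 = ((t : ℝ) + 1/2) * (X : ℕ) := by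
      rw [hmt']; push_cast; ring
    rw [h1, Real.rpow_mul (by norm_num), Real.rpow_natCast]
    congr 1
    rw [Real.rpow_add (by norm_num), Real.rpow_natCast,
      show (1/2 : ℝ) = (2⁻¹ : ℝ) by norm_num,
      show ((2:ℝ) ^ ((2⁻¹ : ℝ))) = Real.sqrt 2 by rw [Real.sqrt_eq_rpow]; norm_num]
    rw [hsdef, hBdef]; ring
  have hLval : Real.sqrt 2 + (2 : ℝ) ^ (-(m : ℝ) / 2) = s + (s * B)⁻¹ := by
    rw [← hsdef]
    congr 1
    have h1 : -(m : ℝ) / 2 = -((m : ℝ) * ((1 : ℕ) : ℝ) / 2) := by push_cast; ring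
    rw [h1, Real.rpow_neg (by norm_num), hg 1, pow_one]
  set L : ℝ := Real.sqrt 2 + (2 : ℝ) ^ (-(m : ℝ) / 2) with hLdef
  have hL_pos : 0 < L := by rw [hLval]; positivity
  have key : ∀ X : ℕ, 1 ≤ X →
      |(mertM q a X : ℝ)| ≤ L * (s * B) ^ X ∧
      (X % 8 = 3 → (mertM q a X : ℝ) = L * (s * B) ^ X) := by
    intro X hX
    rw [hLval, hqb, hab]
    exact mert_key ((2:ℤ)^t) B hbB hB1 X hX
  have hf_le : ∀ X : ℕ,
      |(mertM q a X : ℝ)| / (2 : ℝ) ^ ((m : ℝ) * (X : ℝ) / 2) ≤ L := by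
    intro X
    rcases Nat.eq_zero_or_pos X with rfl | hX
    · simp [mertM]
      positivity
    · rw [hg X, div_le_iff₀ (by positivity)]
      exact (key X hX).1
  have hf_nonneg : ∀ X : ℕ,
      (0:ℝ) ≤ |(mertM q a X : ℝ)| / (2 : ℝ) ^ ((m : ℝ) * (X : ℝ) / 2) := by
    intro X; positivity
  have hf_eq : ∀ n : ℕ,
      |(mertM q a (8*n+3) : ℝ)| / (2 : ℝ) ^ ((m : ℝ) * ((8*n+3 : ℕ) : ℝ) / 2) = L := by
    intro n
    have h3 := (key (8*n+3) (by omega)).2 (by omega)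
    rw [hg, h3, abs_of_nonneg (by positivity), mul_div_assoc, div_self (by positivity), mul_one]
  constructor
  · apply le_antisymm
    · exact limsup_le_of_le (isCoboundedUnder_le_of_le atTop hf_nonneg)
        (Eventually.of_forall hf_le)
    · refine le_limsup_of_frequently_le ?_
        (isBoundedUnder_of_eventually_le (Eventually.of_forall hf_le))
      rw [Filter.frequently_atTop]
      intro N
      exact ⟨8*N + 3, by omega, (hf_eq N).ge⟩
  · intro X hX1 hX3
    rw [hg X]
    exact (key X hX1).2 hX3
end
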